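/- Let ξ be a bounded continuous function on ℝⁿ. If there exist a constant K and s > n/2 such that |ξ(x)| ≤ K·‖x‖^{-s} for all sufficiently large ‖x‖, then ξ ∈ Ξ (i.e., ∑_{p ∈ ℤⁿ} |ξ(x-p)|² converges uniformly on compact sets to a continuous function and is uniformly bounded). -/

import Mathlib

/-!
Boundedness and decay give `‖ξ y‖ ≤ C (1 + ‖y‖)^(-s)`. By Peetre's inequality the terms
`‖ξ (x - p)‖²` are then dominated, uniformly for `x` in a ball, by `C' (1 + ‖p‖)^(-2s)`, which is
summable over `ℤⁿ` because `2s > n`. The Weierstrass M-test gives summability and continuity of the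
periodization; being continuous and `ℤⁿ`-periodic, it has compact range and so is bounded.
-/

open MeasureTheory Filter

noncomputable section

/-- The embedding of the integer lattice `ℤⁿ` into Euclidean `ℝⁿ`. -/
def lattE {n : ℕ} (p : Fin n → ℤ) : EuclideanSpace ℝ (Fin n) := WithLp.toLp 2 (fun i => (p i : ℝ))

/-- The periodization of the square modulus of `ξ`. -/
def perSumE {n : ℕ} (ξ : EuclideanSpace ℝ (Fin n) → ℂ) (x : EuclideanSpace ℝ (Fin n)) : ℝ :=
  ∑' p : Fin n → ℤ, ‖ξ (x - lattE p)‖ ^ 2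

/-- Membership in the module `Ξ`. -/
def InXiE {n : ℕ} (ξ : EuclideanSpace ℝ (Fin n) → ℂ) : Prop :=
  Continuous ξ ∧ (∃ M, ∀ x, ‖ξ x‖ ≤ M) ∧
  (∀ x, Summable fun p : Fin n → ℤ => ‖ξ (x - lattE p)‖ ^ 2) ∧
  (∃ K, ∀ x, perSumE ξ x ≤ K) ∧ Continuous (perSumE ξ)

section Decay

variable {E F : Type*} [SeminormedAddCommGroup E] [SeminormedAddCommGroup F]

lemma one_add_norm_sub_rpow_neg_le {s : ℝ} (hs : 0 ≤ s) (x y : E) :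
    (1 + ‖x - y‖) ^ (-s) ≤ (1 + ‖x‖) ^ s * (1 + ‖y‖) ^ (-s) := by
  have hy : 1 + ‖y‖ ≤ (1 + ‖x‖) * (1 + ‖x - y‖) := by
    nlinarith [norm_le_norm_add_norm_sub' y x, norm_sub_rev x y, norm_nonneg x,
      norm_nonneg (x - y)]
  have hpow : (1 + ‖y‖) ^ s ≤ (1 + ‖x‖) ^ s * (1 + ‖x - y‖) ^ s := by
    rw [← Real.mul_rpow (by positivity) (by positivity)]
    exact Real.rpow_le_rpow (by positivity) hy hs
  rw [Real.rpow_neg (by positivity), Real.rpow_neg (by positivity), ← div_eq_mul_inv,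
    le_div_iff₀ (by positivity), inv_mul_le_iff₀ (by positivity), mul_comm]
  exact hpow

lemma exists_norm_le_mul_one_add_norm_rpow_neg {f : E → F} {M K R s : ℝ}
    (hb : ∀ x, ‖f x‖ ≤ M) (hdecay : ∀ x, R ≤ ‖x‖ → ‖f x‖ ≤ K * ‖x‖ ^ (-s)) (hs : 0 ≤ s) :
    ∃ C, ∀ x, ‖f x‖ ≤ C * (1 + ‖x‖) ^ (-s) := by
  set R₀ := max R 1
  have hM : 0 ≤ M := (norm_nonneg _).trans (hb 0)
  refine ⟨M * (1 + R₀) ^ s + max K 0 * 2 ^ s, fun x => ?_⟩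
  have hA : 0 ≤ M * (1 + R₀) ^ s * (1 + ‖x‖) ^ (-s) := by positivity
  have hB : 0 ≤ max K 0 * 2 ^ s * (1 + ‖x‖) ^ (-s) := by positivity
  rw [add_mul]
  rcases lt_or_ge ‖x‖ R₀ with hx | hx
  · have : 1 ≤ (1 + R₀) ^ s * (1 + ‖x‖) ^ (-s) := by
      rw [Real.rpow_neg (by positivity), ← div_eq_mul_inv, one_le_div (by positivity)]
      exact Real.rpow_le_rpow (by positivity) (by linarith) hs
    nlinarith [hb x]
  · have hx1 : 1 ≤ ‖x‖ := (le_max_right R 1).trans hx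
    have : ‖x‖ ^ (-s) ≤ 2 ^ s * (1 + ‖x‖) ^ (-s) := by
      calc ‖x‖ ^ (-s) = 2 ^ s * (2 * ‖x‖) ^ (-s) := by
            rw [Real.mul_rpow (by norm_num) (by positivity),
              Real.rpow_neg (by norm_num : (0:ℝ) ≤ 2), ← mul_assoc,
              mul_inv_cancel₀ (by positivity), one_mul]
        _ ≤ 2 ^ s * (1 + ‖x‖) ^ (-s) := by
            gcongr 2 ^ s * ?_
            exact Real.rpow_le_rpow_of_nonpos (by positivity) (by linarith) (by linarith)
    calc ‖f x‖ ≤ max K 0 * ‖x‖ ^ (-s) :=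
          (hdecay x ((le_max_left R 1).trans hx)).trans (by gcongr; exact le_max_left K 0)
      _ ≤ max K 0 * (2 ^ s * (1 + ‖x‖) ^ (-s)) := by gcongr
      _ ≤ _ := by rw [← mul_assoc]; linarith

lemma norm_comp_sub_le_of_le_one_add_norm_rpow_neg {g : E → F} {C r ρ : ℝ}
    (hg : ∀ y, ‖g y‖ ≤ C * (1 + ‖y‖) ^ (-r)) (hr : 0 ≤ r) {x : E} (hx : ‖x‖ ≤ ρ) (y : E) :
    ‖g (x - y)‖ ≤ C * (1 + ρ) ^ r * (1 + ‖y‖) ^ (-r) := by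
  have hC : 0 ≤ C := by simpa using (norm_nonneg _).trans (hg 0)
  calc ‖g (x - y)‖ ≤ C * ((1 + ‖x‖) ^ r * (1 + ‖y‖) ^ (-r)) :=
        (hg _).trans (by gcongr; exact one_add_norm_sub_rpow_neg_le hr x y)
    _ ≤ C * (1 + ρ) ^ r * (1 + ‖y‖) ^ (-r) := by rw [← mul_assoc]; gcongr

end Decay

abbrev intLattice (n : ℕ) : Submodule ℤ (EuclideanSpace ℝ (Fin n)) :=
  Submodule.span ℤ (Set.range (EuclideanSpace.basisFun (Fin n) ℝ).toBasis)

def intLatticeEquiv (n : ℕ) : (Fin n → ℤ) ≃ₗ[ℤ] intLattice n :=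
  ((EuclideanSpace.basisFun (Fin n) ℝ).toBasis.restrictScalars ℤ).equivFun.symm

@[simp] lemma coe_intLatticeEquiv {n : ℕ} (p : Fin n → ℤ) :
    (intLatticeEquiv n p : EuclideanSpace ℝ (Fin n)) = lattE p := by
  rw [intLatticeEquiv, Module.Basis.equivFun_symm_apply, Submodule.coe_sum]
  ext i
  simp only [Submodule.coe_smul_of_tower, Module.Basis.restrictScalars_apply]
  simp [lattE, Pi.single_apply]

lemma lattE_add {n : ℕ} (p q : Fin n → ℤ) : lattE (p + q) = lattE p + lattE q := by
  simp only [← coe_intLatticeEquiv, map_add, Submodule.coe_add]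

lemma lattE_ne_zero {n : ℕ} {p : Fin n → ℤ} (hp : p ≠ 0) : lattE p ≠ 0 := by
  rwa [← coe_intLatticeEquiv, ne_eq, ZeroMemClass.coe_eq_zero, LinearEquiv.map_eq_zero_iff]

lemma finrank_intLattice (n : ℕ) : Module.finrank ℤ (intLattice n) = n := by
  simp [Module.finrank_eq_card_basis
    ((EuclideanSpace.basisFun (Fin n) ℝ).toBasis.restrictScalars ℤ)]

lemma summable_norm_lattE_rpow {n : ℕ} {r : ℝ} (hr : r < -n) :
    Summable fun p : Fin n → ℤ => ‖lattE p‖ ^ r := by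
  have := ZLattice.summable_norm_rpow (intLattice n) r (by rwa [finrank_intLattice])
  simpa [Function.comp_def] using (intLatticeEquiv n).toEquiv.summable_iff.mpr this

lemma summable_one_add_norm_lattE_rpow_neg {n : ℕ} {r : ℝ} (hr : n < r) :
    Summable fun p : Fin n → ℤ => (1 + ‖lattE p‖) ^ (-r) := by
  refine (summable_norm_lattE_rpow (neg_lt_neg hr)).of_norm_bounded_eventually ?_
  filter_upwards [eventually_cofinite_ne 0] with p hp
  have hp' : 0 < ‖lattE p‖ := norm_pos_iff.2 (lattE_ne_zero hp)
  rw [Real.norm_of_nonneg (by positivity)]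
  exact Real.rpow_le_rpow_of_nonpos hp' (by linarith) (by linarith [n.cast_nonneg' (α := ℝ)])

section Periodization

variable {n : ℕ} {F : Type*} [NormedAddCommGroup F] {g : EuclideanSpace ℝ (Fin n) → F}
  {C r : ℝ}

lemma tsum_comp_add_lattE_sub_lattE (g : EuclideanSpace ℝ (Fin n) → F)
    (x : EuclideanSpace ℝ (Fin n)) (q : Fin n → ℤ) :
    ∑' p, g (x + lattE q - lattE p) = ∑' p, g (x - lattE p) := by
  rw [← (Equiv.addRight q).tsum_eq (fun p => g (x + lattE q - lattE p))]
  simp only [Equiv.coe_addRight, lattE_add, add_sub_add_right_eq_sub]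

lemma exists_summable_forall_norm_comp_sub_lattE_le
    (hg : ∀ y, ‖g y‖ ≤ C * (1 + ‖y‖) ^ (-r)) (hr : n < r) (ρ : ℝ) :
    ∃ u : (Fin n → ℤ) → ℝ, Summable u ∧ ∀ p x, ‖x‖ ≤ ρ → ‖g (x - lattE p)‖ ≤ u p :=
  ⟨_, (summable_one_add_norm_lattE_rpow_neg hr).mul_left (C * (1 + ρ) ^ r), fun _ _ hx =>
    norm_comp_sub_le_of_le_one_add_norm_rpow_neg hg ((Nat.cast_nonneg n).trans hr.le) hx _⟩

variable [CompleteSpace F]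

lemma summable_comp_sub_lattE (hg : ∀ y, ‖g y‖ ≤ C * (1 + ‖y‖) ^ (-r)) (hr : n < r)
    (x : EuclideanSpace ℝ (Fin n)) :
    Summable fun p => g (x - lattE p) := by
  obtain ⟨u, hu, hle⟩ := exists_summable_forall_norm_comp_sub_lattE_le hg hr ‖x‖
  exact hu.of_norm_bounded fun p => hle p x le_rfl

lemma continuous_tsum_comp_sub_lattE (hgc : Continuous g)
    (hg : ∀ y, ‖g y‖ ≤ C * (1 + ‖y‖) ^ (-r)) (hr : n < r) :
    Continuous fun x => ∑' p, g (x - lattE p) := by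
  refine continuous_iff_continuousAt.2 fun x₀ => ?_
  obtain ⟨u, hu, hle⟩ := exists_summable_forall_norm_comp_sub_lattE_le hg hr (‖x₀‖ + 1)
  have hco : ContinuousOn (fun x => ∑' p, g (x - lattE p)) (Metric.ball x₀ 1) :=
    continuousOn_tsum (fun p => by fun_prop) hu fun p x hx => hle p x <| by
      linarith [norm_le_norm_add_norm_sub' x x₀, mem_ball_iff_norm.mp hx]
  exact hco.continuousAt (Metric.ball_mem_nhds x₀ one_pos)

lemma exists_forall_norm_tsum_comp_sub_lattE_le (hgc : Continuous g)
    (hg : ∀ y, ‖g y‖ ≤ C * (1 + ‖y‖) ^ (-r)) (hr : n < r) :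
    ∃ K, ∀ x, ‖∑' p, g (x - lattE p)‖ ≤ K := by
  have hcpt := IsZLattice.isCompact_range_of_periodic (intLattice n) _
    (continuous_tsum_comp_sub_lattE hgc hg hr) fun x w hw => by
    obtain ⟨q, hq⟩ := (intLatticeEquiv n).surjective ⟨w, hw⟩
    obtain rfl : lattE q = w := by rw [← coe_intLatticeEquiv, hq]
    exact tsum_comp_add_lattE_sub_lattE g x q
  obtain ⟨K, hK⟩ := hcpt.isBounded.exists_norm_le
  exact ⟨K, fun x => hK _ ⟨x, rfl⟩⟩

end Periodization

theorem stmt7 {n : ℕ} (ξ : EuclideanSpace ℝ (Fin n) → ℂ)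
    (hc : Continuous ξ) (hb : ∃ M, ∀ x, ‖ξ x‖ ≤ M)
    (K s R : ℝ) (hs : (n : ℝ) / 2 < s)
    (hdecay : ∀ x : EuclideanSpace ℝ (Fin n), R ≤ ‖x‖ → ‖ξ x‖ ≤ K * ‖x‖ ^ (-s)) :
    InXiE ξ := by
  obtain ⟨M, hM⟩ := hb
  have hs₀ : 0 ≤ s := le_trans (by positivity) hs.le
  have hr : (n : ℝ) < 2 * s := by linarith
  obtain ⟨C, hC⟩ := exists_norm_le_mul_one_add_norm_rpow_neg hM hdecay hs₀
  have hsq : ∀ y, ‖‖ξ y‖ ^ 2‖ ≤ C ^ 2 * (1 + ‖y‖) ^ (-(2 * s)) := fun y => by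
    rw [norm_pow, norm_norm, show -(2 * s) = -s * (2 : ℕ) by push_cast; ring,
      Real.rpow_mul_natCast (by positivity), ← mul_pow]
    exact pow_le_pow_left₀ (norm_nonneg _) (hC y) 2
  have hcsq : Continuous fun y => ‖ξ y‖ ^ 2 := by fun_prop
  obtain ⟨B, hB⟩ := exists_forall_norm_tsum_comp_sub_lattE_le hcsq hsq hr
  exact ⟨hc, ⟨M, hM⟩, summable_comp_sub_lattE hsq hr,
    ⟨B, fun x => (le_abs_self _).trans (hB x)⟩, continuous_tsum_comp_sub_lattE hcsq hsq hr⟩
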